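/- arXiv:1407.7435 — 15 statements merged into one kernel-verified Lean document; each statement's English description precedes it below -/
import Mathlib

section
/- Let (A,⊕) be a ccm-magma, let f, g : A → A be injective self-maps of A, and let h, k : A → A be maps such that f(g(x ⊕ y) ⊕ z) = (h(x) ⊕ h(y)) ⊕ k(z) for all x, y, z ∈ A. Then for every choice of a ∈ A, the binary operation (x,y) ↦ g(f(x) ⊕ f(y)) ⊕ a on A satisfies commutativity (M1), cancellation (M2), and mediality (M3), i.e., it makes A a ccm-magma. -/
/-- A commutative cancellative medial magma (ccm-magma). -/
structure CCM (A : Type*) where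
  op : A → A → A
  comm : ∀ a b, op a b = op b a
  cancel : ∀ a b c, op a c = op b c → a = b
  medial : ∀ a b c d, op (op a b) (op c d) = op (op a c) (op b d)

theorem stmt1 {A : Type*} (M : CCM A) (f g h k : A → A)
    (hf : Function.Injective f) (hg : Function.Injective g)
    (hyp : ∀ x y z, f (M.op (g (M.op x y)) z) = M.op (M.op (h x) (h y)) (k z))
    (a : A) :
    (∀ x y, M.op (g (M.op (f x) (f y))) a = M.op (g (M.op (f y) (f x))) a) ∧
    (∀ x y z, M.op (g (M.op (f x) (f z))) a = M.op (g (M.op (f y) (f z))) a → x = y) ∧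
    (∀ x y z w,
      M.op (g (M.op (f (M.op (g (M.op (f x) (f y))) a)) (f (M.op (g (M.op (f z) (f w))) a)))) a =
      M.op (g (M.op (f (M.op (g (M.op (f x) (f z))) a)) (f (M.op (g (M.op (f y) (f w))) a)))) a) := by
  refine ⟨fun x y => by rw [M.comm (f x) (f y)], ?_, ?_⟩
  · intro x y z hxy
    exact hf (M.cancel _ _ _ (hg (M.cancel _ _ _ hxy)))
  · intro x y z w
    congr 1
    congr 1
    have key : ∀ u v, f (M.op (g (M.op (f u) (f v))) a)
        = M.op (M.op (h (f u)) (h (f v))) (k a) := fun u v => hyp (f u) (f v) a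
    rw [key, key, key, key, M.medial (M.op (h (f x)) (h (f y))) (k a),
      M.medial (M.op (h (f x)) (h (f z))) (k a),
      M.medial (h (f x)) (h (f y)) (h (f z)) (h (f w))]
end

section
/- Let A and B be ccm-magmas and let f, g : A × A → B be homomorphisms of ccm-magmas (A × A with the componentwise operation) such that f(a,a) = g(a,a) for every a ∈ A. Then: (i) if f(a,b) = g(a,b) and f(b,c) = g(b,c), then f(a,c) = g(a,c); and (ii) if f(a,b) = g(a,b), then f(b,a) = g(b,a). -/
theorem stmt2 {A B : Type*} (MA : CCM A) (MB : CCM B) (f g : A × A → B)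
    (hf : ∀ p q : A × A, f (MA.op p.1 q.1, MA.op p.2 q.2) = MB.op (f p) (f q))
    (hg : ∀ p q : A × A, g (MA.op p.1 q.1, MA.op p.2 q.2) = MB.op (g p) (g q))
    (hdiag : ∀ a : A, f (a, a) = g (a, a)) :
    (∀ a b c : A, f (a, b) = g (a, b) → f (b, c) = g (b, c) → f (a, c) = g (a, c)) ∧
    (∀ a b : A, f (a, b) = g (a, b) → f (b, a) = g (b, a)) := by
  constructor
  · intro a b c h1 h2
    apply MB.cancel _ _ (f (b, b))
    have e1 : MB.op (f (a, c)) (f (b, b)) = f (MA.op a b, MA.op c b) :=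
      (hf (a, c) (b, b)).symm
    have e2 : MB.op (g (a, c)) (g (b, b)) = g (MA.op a b, MA.op c b) :=
      (hg (a, c) (b, b)).symm
    have e3 : MB.op (f (a, b)) (f (b, c)) = f (MA.op a b, MA.op b c) :=
      (hf (a, b) (b, c)).symm
    have e4 : MB.op (g (a, b)) (g (b, c)) = g (MA.op a b, MA.op b c) :=
      (hg (a, b) (b, c)).symm
    calc MB.op (f (a, c)) (f (b, b)) = f (MA.op a b, MA.op c b) := e1
      _ = f (MA.op a b, MA.op b c) := by rw [MA.comm c b]
      _ = MB.op (f (a, b)) (f (b, c)) := e3.symm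
      _ = MB.op (g (a, b)) (g (b, c)) := by rw [h1, h2]
      _ = g (MA.op a b, MA.op b c) := e4
      _ = g (MA.op a b, MA.op c b) := by rw [MA.comm b c]
      _ = MB.op (g (a, c)) (g (b, b)) := e2.symm
      _ = MB.op (g (a, c)) (f (b, b)) := by rw [hdiag b]
  · intro a b h1
    apply MB.cancel _ _ (f (a, b))
    calc MB.op (f (b, a)) (f (a, b)) = f (MA.op b a, MA.op a b) := (hf (b, a) (a, b)).symm
      _ = f (MA.op a b, MA.op a b) := by rw [MA.comm b a]
      _ = g (MA.op a b, MA.op a b) := hdiag _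
      _ = g (MA.op b a, MA.op a b) := by rw [MA.comm b a]
      _ = MB.op (g (b, a)) (g (a, b)) := hg (b, a) (a, b)
      _ = MB.op (g (b, a)) (f (a, b)) := by rw [h1]
end

section
/- Let X, Y, B be ccm-magmas and let f, g : X × Y → B be homomorphisms of ccm-magmas (X × Y with the componentwise operation). If f(x,y) = g(x,y), f(z,y) = g(z,y), and f(z,w) = g(z,w), then f(x,w) = g(x,w). In particular, the relation R ⊆ X × Y defined by x R y ⇔ f(x,y) = g(x,y) is difunctional. -/
theorem stmt3 {X Y B : Type*} (MX : CCM X) (MY : CCM Y) (MB : CCM B)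
    (f g : X × Y → B)
    (hf : ∀ p q : X × Y, f (MX.op p.1 q.1, MY.op p.2 q.2) = MB.op (f p) (f q))
    (hg : ∀ p q : X × Y, g (MX.op p.1 q.1, MY.op p.2 q.2) = MB.op (g p) (g q)) :
    ∀ (x z : X) (y w : Y),
      f (x, y) = g (x, y) → f (z, y) = g (z, y) → f (z, w) = g (z, w) →
        f (x, w) = g (x, w) := by
  intro x z y w h1 h2 h3
  have hf' := hf (x, w) (z, y)
  have hf'' := hf (x, y) (z, w)
  have hg' := hg (x, w) (z, y)
  have hg'' := hg (x, y) (z, w)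
  simp only [] at hf' hf'' hg' hg''
  have key : MB.op (f (x, w)) (f (z, y)) = MB.op (g (x, w)) (g (z, y)) := by
    rw [← hf', ← hg']
    have : (MX.op x z, MY.op w y) = (MX.op x z, MY.op y w) := by
      rw [MY.comm]
    rw [this] at *
    rw [hf'', hg'', h1, h3]
  rw [h2] at key
  exact MB.cancel _ _ _ key
end

section
/- Let (A,⊕) be a ccm-magma and define the ternary term p(x,y,z) = (y ⊕ x) ⊕ (z ⊕ y). Then p(x,y,y) = p(y,y,x) for all x, y ∈ A, and for all x, y, a ∈ A, p(x,a,a) = p(y,a,a) implies x = y. (These two properties of a ternary term are, by a known criterion, sufficient for the variety of ccm-magmas to be a weakly Mal'tsev category.) -/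
theorem stmt4 {A : Type*} (M : CCM A) :
    (∀ x y : A, M.op (M.op y x) (M.op y y) = M.op (M.op y y) (M.op x y)) ∧
    (∀ x y a : A, M.op (M.op a x) (M.op a a) = M.op (M.op a y) (M.op a a) → x = y) := by
  constructor
  · intro x y
    rw [M.comm (M.op y x) (M.op y y), M.comm y x]
  · intro x y a h
    have h1 : M.op x a = M.op y a :=
      M.cancel _ _ _ (by rwa [M.comm x a, M.comm y a])
    exact M.cancel _ _ _ h1
end

section
/- Let (A,⊕) be a ccm-magma and let e ∈ A be an idempotent element (e ⊕ e = e). There exists an internal monoid structure on A with unit e — that is, a binary operation * on A which is associative, has e as a two-sided unit, and satisfies the compatibility law (x * y) ⊕ (z * w) = (x ⊕ z) * (y ⊕ w) for all x, y, z, w — if and only if for every x, y ∈ A the equation θ ⊕ e = x ⊕ y has a solution θ ∈ A. When such a structure exists, x * y is the (unique, by cancellation) solution θ of θ ⊕ e = x ⊕ y. -/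
theorem stmt5 {A : Type*} (M : CCM A) (e : A) (he : M.op e e = e) :
    ((∃ star : A → A → A,
        (∀ x y z, star (star x y) z = star x (star y z)) ∧
        (∀ x, star e x = x) ∧ (∀ x, star x e = x) ∧
        (∀ x y z w, M.op (star x y) (star z w) = star (M.op x z) (M.op y w))) ↔
      (∀ x y, ∃ θ, M.op θ e = M.op x y)) ∧
    (∀ star : A → A → A,
        (∀ x y z, star (star x y) z = star x (star y z)) →
        (∀ x, star e x = x) → (∀ x, star x e = x) →
        (∀ x y z w, M.op (star x y) (star z w) = star (M.op x z) (M.op y w)) →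
        ∀ x y, M.op (star x y) e = M.op x y) := by
  -- key fact for any internal monoid structure
  have key : ∀ star : A → A → A,
      (∀ x, star e x = x) → (∀ x, star x e = x) →
      (∀ x y z w, M.op (star x y) (star z w) = star (M.op x z) (M.op y w)) →
      ∀ x y, M.op (star x y) e = M.op x y := by
    intro star hl hr hc x y
    have h1 : M.op (star x y) (star e e) = star (M.op x e) (M.op y e) := hc x y e e
    have h2 : M.op (star x e) (star e y) = star (M.op x e) (M.op e y) := hc x e e y
    rw [hr, hl] at h2
    rw [hl e] at h1
    rw [h1, M.comm y e]
    exact h2.symm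
  constructor
  · constructor
    · rintro ⟨star, _, hl, hr, hc⟩ x y
      exact ⟨star x y, key star hl hr hc x y⟩
    · intro hsol
      set star : A → A → A := fun x y => Classical.choose (hsol x y) with hstar
      have hspec : ∀ x y, M.op (star x y) e = M.op x y := fun x y =>
        Classical.choose_spec (hsol x y)
      have huniq : ∀ x y θ, M.op θ e = M.op x y → θ = star x y := by
        intro x y θ h
        exact M.cancel θ (star x y) e (h.trans (hspec x y).symm)
      refine ⟨star, ?_, ?_, ?_, ?_⟩
      · intro x y z
        -- first: (x*y)⊕z = x⊕(y*z)
        have hmid : M.op (M.op (star x y) z) e = M.op (M.op x (star y z)) e := by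
          conv_lhs => rw [← he]
          conv_rhs => rw [← he]
          rw [M.medial (star x y) z e e, M.medial x (star y z) e e,
            hspec x y, hspec y z, M.medial x e y z, M.comm e z]
        have hmid' := M.cancel _ _ e hmid
        refine (huniq x (star y z) (star (star x y) z) ?_)
        rw [hspec (star x y) z, hmid']
      · intro x
        exact (huniq e x x (by rw [M.comm x e, M.comm e x])).symm
      · intro x
        exact (huniq x e x rfl).symm
      · intro x y z w
        apply huniq
        conv_lhs => rw [← he]
        rw [M.medial, hspec x y, hspec z w, M.medial]
  · intro star _ hl hr hc
    exact key star hl hr hc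
end

section
/- Let (A,⊕) be a ccm-magma and let e ∈ A. If *₁ and *₂ are two binary operations on A, each having e as a two-sided unit (e * x = x = x * e) and each satisfying the compatibility law (x * y) ⊕ (z * w) = (x ⊕ z) * (y ⊕ w) for all x, y, z, w ∈ A, then *₁ = *₂. In other words, a ccm-magma admits at most one internal monoid structure for any given unit element e, and for any such structure (x * y) ⊕ e = x ⊕ y holds for all x, y. -/
theorem stmt6 {A : Type*} (M : CCM A) (e : A) (star₁ star₂ : A → A → A)
    (u1l : ∀ x, star₁ e x = x) (u1r : ∀ x, star₁ x e = x)
    (c1 : ∀ x y z w, M.op (star₁ x y) (star₁ z w) = star₁ (M.op x z) (M.op y w))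
    (u2l : ∀ x, star₂ e x = x) (u2r : ∀ x, star₂ x e = x)
    (c2 : ∀ x y z w, M.op (star₂ x y) (star₂ z w) = star₂ (M.op x z) (M.op y w)) :
    star₁ = star₂ ∧ ∀ x y, M.op (star₁ x y) e = M.op x y := by
  have key : ∀ (s : A → A → A), (∀ x, s e x = x) → (∀ x, s x e = x) →
      (∀ x y z w, M.op (s x y) (s z w) = s (M.op x z) (M.op y w)) →
      ∀ x y, M.op (s x y) e = M.op x y := by
    intro s ul ur c x y
    have h1 : M.op (s x y) e = s (M.op x e) (M.op y e) := by
      have := c x y e e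
      rwa [ur e] at this
    have h2 : M.op x y = s (M.op x e) (M.op e y) := by
      have := c x e e y
      rwa [ur x, ul y] at this
    rw [h1, h2, M.comm y e]
  have k1 := key star₁ u1l u1r c1
  have k2 := key star₂ u2l u2r c2
  refine ⟨?_, k1⟩
  funext x y
  exact M.cancel _ _ e ((k1 x y).trans (k2 x y).symm)
end

section
/- Let (A,⊕) be a ccm-magma, let e ∈ A be idempotent (e ⊕ e = e), and suppose A is e-expansive, witnessed by a map d : A → A with d(a) ⊕ e = a for all a ∈ A. Then the operation x * y := d(x ⊕ y) is associative, commutative, has e as a two-sided unit, and satisfies the compatibility law (x * y) ⊕ (z * w) = (x ⊕ z) * (y ⊕ w) for all x, y, z, w; that is, (A,*,e) is an internal monoid structure on A with unit e. -/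
theorem stmt7 {A : Type*} (M : CCM A) (e : A) (he : M.op e e = e)
    (d : A → A) (hd : ∀ a, M.op (d a) e = a) :
    (∀ x y z : A, d (M.op (d (M.op x y)) z) = d (M.op x (d (M.op y z)))) ∧
    (∀ x y : A, d (M.op x y) = d (M.op y x)) ∧
    (∀ x : A, d (M.op e x) = x) ∧ (∀ x : A, d (M.op x e) = x) ∧
    (∀ x y z w : A,
      M.op (d (M.op x y)) (d (M.op z w)) = d (M.op (M.op x z) (M.op y w))) := by
  have hdop : ∀ a b, M.op (d a) (d b) = d (M.op a b) := by
    intro a b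
    apply M.cancel _ _ e
    rw [hd]
    calc M.op (M.op (d a) (d b)) e = M.op (M.op (d a) (d b)) (M.op e e) := by rw [he]
      _ = M.op (M.op (d a) e) (M.op (d b) e) := M.medial _ _ _ _
      _ = M.op a b := by rw [hd, hd]
  have hre : ∀ x, d (M.op x e) = x := by
    intro x; exact M.cancel _ _ e (by rw [hd])
  have hle : ∀ x, d (M.op e x) = x := by
    intro x; rw [M.comm]; exact hre x
  refine ⟨?_, ?_, hle, hre, ?_⟩
  · intro x y z
    congr 1
    conv_lhs => rw [show z = d (M.op z e) from (hre z).symm]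
    conv_rhs => rw [show x = d (M.op x e) from (hre x).symm]
    rw [hdop, hdop, M.medial, M.medial x e y z, M.comm e z, M.medial x y z e]
  · intro x y; rw [M.comm]
  · intro x y z w
    rw [hdop, M.medial]
end

section
/- Let (A,⊕) be a ccm-magma and let e ∈ A. If A is e-expansive and e-symmetric, then A is homogeneous: for every u, v ∈ A there exists x ∈ A with x ⊕ u = v. -/
theorem stmt9 {A : Type*} (M : CCM A) (e : A)
    (hexp : ∀ a : A, ∃ x : A, M.op x e = a)
    (hsym : ∀ a : A, ∃ b : A, M.op b a = e) :
    ∀ u v : A, ∃ x : A, M.op x u = v := by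
  intro u v
  obtain ⟨b, hb⟩ := hsym u
  obtain ⟨c, hc⟩ := hexp (M.op v (M.op b e))
  obtain ⟨y, hy⟩ := hexp c
  refine ⟨y, M.cancel _ _ (M.op b e) ?_⟩
  calc M.op (M.op y u) (M.op b e)
      = M.op (M.op y u) (M.op e b) := by rw [M.comm b e]
    _ = M.op (M.op y e) (M.op u b) := M.medial y u e b
    _ = M.op c e := by rw [hy, M.comm u b, hb]
    _ = M.op v (M.op b e) := hc
end

section
/- Let (A,⊕) be a ccm-magma and let u, v ∈ A be idempotent elements (u ⊕ u = u, v ⊕ v = v) such that A is u-expansive and v-expansive, witnessed by maps d_u, d_v : A → A with d_u(a) ⊕ u = a and d_v(a) ⊕ v = a for all a. Define a *_u b := d_u(a ⊕ b) and a *_v b := d_v(a ⊕ b). Then the map f : A → A, f(a) = d_u(a ⊕ v), satisfies: f(u) = v; f(a *_u b) = f(a) *_v f(b) for all a, b; and f is a bijection with inverse g(a) = d_v(a ⊕ u) (i.e., g(f(a)) = a and f(g(a)) = a for all a). Hence the monoids (A,*_u,u) and (A,*_v,v) are isomorphic. Moreover, a *_u b = (a *_v b) *_u v for all a, b ∈ A.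 -/
theorem stmt11 {A : Type*} (M : CCM A) (u v : A)
    (hu : M.op u u = u) (hv : M.op v v = v)
    (du dv : A → A) (hdu : ∀ a, M.op (du a) u = a) (hdv : ∀ a, M.op (dv a) v = a)
    (starU : A → A → A) (hsU : ∀ a b, starU a b = du (M.op a b))
    (starV : A → A → A) (hsV : ∀ a b, starV a b = dv (M.op a b))
    (f : A → A) (hfdef : ∀ a, f a = du (M.op a v))
    (g : A → A) (hgdef : ∀ a, g a = dv (M.op a u)) :
    f u = v ∧
    (∀ a b, f (starU a b) = starV (f a) (f b)) ∧
    (∀ a, g (f a) = a) ∧ (∀ a, f (g a) = a) ∧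
    (∀ a b, starU a b = starU (starV a b) v) := by
  have hdu' : ∀ x, du (M.op x u) = x := fun x => M.cancel _ _ u (by rw [hdu])
  have hdv' : ∀ x, dv (M.op x v) = x := fun x => M.cancel _ _ v (by rw [hdv])
  refine ⟨?_, ?_, ?_, ?_, ?_⟩
  · rw [hfdef, M.comm, hdu']
  · intro a b
    apply M.cancel _ _ v
    apply M.cancel _ _ u
    have hL : M.op (M.op (f (starU a b)) v) u = M.op (M.op a b) v := by
      calc M.op (M.op (f (starU a b)) v) u
          = M.op (M.op (f (starU a b)) v) (M.op u u) := by rw [hu]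
        _ = M.op (M.op (f (starU a b)) u) (M.op v u) := M.medial ..
        _ = M.op (M.op (starU a b) v) (M.op v u) := by rw [hfdef, hdu]
        _ = M.op (M.op (starU a b) v) (M.op u v) := by rw [M.comm v u]
        _ = M.op (M.op (starU a b) u) (M.op v v) := M.medial ..
        _ = M.op (M.op a b) v := by rw [hsU, hdu, hv]
    have hR : M.op (M.op (starV (f a) (f b)) v) u = M.op (M.op a b) v := by
      calc M.op (M.op (starV (f a) (f b)) v) u
          = M.op (M.op (f a) (f b)) u := by rw [hsV, hdv]
        _ = M.op (M.op (f a) (f b)) (M.op u u) := by rw [hu]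
        _ = M.op (M.op (f a) u) (M.op (f b) u) := M.medial ..
        _ = M.op (M.op a v) (M.op b v) := by rw [hfdef, hfdef, hdu, hdu]
        _ = M.op (M.op a b) (M.op v v) := M.medial ..
        _ = M.op (M.op a b) v := by rw [hv]
    rw [hL, hR]
  · intro a; rw [hfdef, hgdef, hdu, hdv']
  · intro a; rw [hgdef, hfdef, hdv, hdu']
  · intro a b; rw [hsU a b, hsU _ v, hsV, hdv]
end

section
/- Let (A,⊕) be a ccm-magma and let e ∈ A be an idempotent element (e ⊕ e = e). Then the following are equivalent: (i) the operation ⊕ is associative; (ii) e is a unit element for ⊕, i.e., a ⊕ e = a for all a ∈ A; (iii) A is e-expansive with expansion map the identity, i.e., a ⊕ e = a for all a; (iv) (A,⊕,e) is a monoid whose operation ⊕ satisfies the compatibility law (x ⊕ y) ⊕ (z ⊕ w) = (x ⊕ z) ⊕ (y ⊕ w) (an internal monoid). -/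
theorem stmt12 {A : Type*} (M : CCM A) (e : A) (he : M.op e e = e) :
    List.TFAE
      [ (∀ a b c, M.op (M.op a b) c = M.op a (M.op b c)),
        (∀ a, M.op a e = a),
        (∀ a : A, ∃ x, M.op x e = a) ∧ (∀ a, M.op a e = a),
        ((∀ a b c, M.op (M.op a b) c = M.op a (M.op b c)) ∧
          (∀ a, M.op e a = a) ∧ (∀ a, M.op a e = a) ∧
          (∀ x y z w, M.op (M.op x y) (M.op z w) = M.op (M.op x z) (M.op y w))) ] := by
  tfae_have 1 → 2 := by
    intro h a
    apply M.cancel _ _ e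
    rw [h, he]
  tfae_have 2 → 1 := by
    intro h a b c
    have swap : ∀ x y z, M.op (M.op x y) z = M.op (M.op x z) y := by
      intro x y z
      have := M.medial x y z e
      rwa [h, h] at this
    rw [M.comm a (M.op b c), M.comm b c, swap, swap c b a, M.comm c a]
  tfae_have 2 → 3 := fun h => ⟨fun a => ⟨a, h a⟩, h⟩
  tfae_have 3 → 2 := fun h => h.2
  tfae_have 2 → 4 := by
    intro h
    refine ⟨?_, fun a => (M.comm e a).trans (h a), h, M.medial⟩
    intro a b c
    have swap : ∀ x y z, M.op (M.op x y) z = M.op (M.op x z) y := by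
      intro x y z
      have := M.medial x y z e
      rwa [h, h] at this
    rw [M.comm a (M.op b c), M.comm b c, swap, swap c b a, M.comm c a]
  tfae_have 4 → 1 := fun h => h.1
  tfae_finish
end

section
/- Let (A,⊕) be a midpoint algebra, i.e., a ccm-magma in which every element is idempotent (a ⊕ a = a for all a), and let e ∈ A. Then the following are equivalent: (i) there is an internal monoid structure on A with unit e, i.e., a binary operation * on A which is associative, has e as a two-sided unit, and satisfies (x * y) ⊕ (z * w) = (x ⊕ z) * (y ⊕ w); (ii) for every a, b ∈ A there exists x ∈ A with x ⊕ e = a ⊕ b; (iii) A is e-expansive, i.e., for every a ∈ A there exists x ∈ A with x ⊕ e = a. -/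
theorem stmt14 {A : Type*} (M : CCM A) (hid : ∀ a, M.op a a = a) (e : A) :
    List.TFAE
      [ (∃ star : A → A → A,
          (∀ x y z, star (star x y) z = star x (star y z)) ∧
          (∀ x, star e x = x) ∧ (∀ x, star x e = x) ∧
          (∀ x y z w, M.op (star x y) (star z w) = star (M.op x z) (M.op y w))),
        (∀ a b : A, ∃ x : A, M.op x e = M.op a b),
        (∀ a : A, ∃ x : A, M.op x e = a) ] := by
  tfae_have 3 → 2 := fun h a b => h (M.op a b)
  tfae_have 2 → 3 := by
    intro h a
    obtain ⟨x, hx⟩ := h a a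
    exact ⟨x, by rw [hx, hid]⟩
  tfae_have 1 → 2 := by
    rintro ⟨star, hassoc, hl, hr, hhom⟩ a b
    refine ⟨star a b, ?_⟩
    have h1 := hhom a b e e
    rw [hl e] at h1
    -- (a*b)⊕e = (a⊕e)*(b⊕e)
    have h2 := hhom a e e b
    rw [hr a, hl b] at h2
    -- a⊕b = (a⊕e)*(e⊕b)
    rw [h1, h2, M.comm e b]
  tfae_have 3 → 1 := by
    intro h
    choose D hD using h
    have hinj : ∀ a b, M.op a e = M.op b e → a = b := fun a b h => M.cancel a b e h
    have hDe : ∀ x, D (M.op e x) = x := fun x => hinj _ _ (by rw [hD, M.comm])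
    have hDop : ∀ a b, M.op (D a) (D b) = D (M.op a b) := by
      intro a b
      apply hinj
      rw [hD]
      conv_lhs => rw [← hid e]
      rw [M.medial, hD, hD]
    refine ⟨fun x y => D (M.op x y), ?_, ?_, ?_, ?_⟩
    · intro x y z
      show D (M.op (D (M.op x y)) z) = D (M.op x (D (M.op y z)))
      have key : M.op (D (M.op x y)) z = M.op x (D (M.op y z)) := by
        apply hinj
        conv_lhs => rw [← hid e, M.medial, hD]
        conv_rhs => rw [← hid e, M.medial, hD]
        -- goal: (x⊕y)⊕(z⊕e) = (x⊕e)⊕(y⊕z)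
        conv_rhs => rw [M.medial, M.comm e z]
      rw [key]
    · intro x
      exact hDe x
    · intro x
      show D (M.op x e) = x
      rw [M.comm]; exact hDe x
    · intro x y z w
      rw [hDop, M.medial]
  tfae_finish
end

section
/- Let (A,⊕) be a ccm-magma equipped with an internal monoid structure (A,*,e): a binary operation * which is associative, has e as a two-sided unit, and satisfies (x * y) ⊕ (z * w) = (x ⊕ z) * (y ⊕ w) for all x, y, z, w. Then the following are equivalent: (i) every element of A is idempotent (a ⊕ a = a for all a, i.e., A is a midpoint algebra); (ii) * is left-distributive over ⊕: x * (y ⊕ z) = (x * y) ⊕ (x * z) for all x, y, z ∈ A. -/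
theorem stmt15 {A : Type*} (M : CCM A) (e : A) (star : A → A → A)
    (hassoc : ∀ x y z, star (star x y) z = star x (star y z))
    (hul : ∀ x, star e x = x) (hur : ∀ x, star x e = x)
    (hcompat : ∀ x y z w, M.op (star x y) (star z w) = star (M.op x z) (M.op y w)) :
    (∀ a, M.op a a = a) ↔
      (∀ x y z, star x (M.op y z) = M.op (star x y) (star x z)) := by
  constructor
  · intro hid x y z
    have h := hcompat x y x z
    rw [hid x] at h
    exact h.symm
  · intro hdist
    -- u := e ⊕ e satisfies u * u = u
    set u := M.op e e with hu
    have huu : star u u = u := by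
      have h := hcompat e e e e
      rw [hur] at h
      exact h.symm
    -- e ⊕ x = u * (e ⊕ x)
    have h1 : ∀ x, M.op e x = star u (M.op e x) := by
      intro x
      have h := hcompat e e e x
      rw [hur, hul] at h
      exact h
    -- e ⊕ u = u ⊕ u, hence e = u by cancellation
    have h2 : M.op e u = M.op u u := by
      have := h1 u
      rw [hdist u e u, hur, huu] at this
      exact this
    have heu : e = u := M.cancel e u u h2
    -- now a = a * e = a * (e ⊕ e) = a ⊕ a
    intro a
    have h3 : star a (M.op e e) = M.op (star a e) (star a e) := hdist a e e
    rw [← hu, ← heu, hur] at h3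
    exact h3.symm
end

section
/- Let (A,⊕) be a ccm-magma, X ⊆ A a subalgebra (closed under ⊕), and e ∈ X an idempotent element (e ⊕ e = e). Define the relation R on A by a R b ⇔ there exists x ∈ X with a ⊕ e = x ⊕ b. Then: (i) R is compatible with ⊕, i.e., a R b and a' R b' imply (a ⊕ a') R (b ⊕ b'); (ii) R is reflexive; and (iii) if for all x, y ∈ X there exists z ∈ X with z ⊕ e = x ⊕ y (i.e., X carries the internal monoid structure with unit e), then R is transitive. -/
theorem stmt16 {A : Type*} (M : CCM A) (X : Set A)
    (hX : ∀ x ∈ X, ∀ y ∈ X, M.op x y ∈ X)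
    (e : A) (heX : e ∈ X) (he : M.op e e = e)
    (R : A → A → Prop) (hR : ∀ a b, R a b ↔ ∃ x ∈ X, M.op a e = M.op x b) :
    (∀ a b a' b', R a b → R a' b' → R (M.op a a') (M.op b b')) ∧
    (∀ a, R a a) ∧
    ((∀ x ∈ X, ∀ y ∈ X, ∃ z ∈ X, M.op z e = M.op x y) →
      ∀ a b c, R a b → R b c → R a c) := by
  refine ⟨?_, ?_, ?_⟩
  · intro a b a' b' hab ha'b'
    obtain ⟨x, hx, hxe⟩ := (hR a b).1 hab
    obtain ⟨x', hx', hxe'⟩ := (hR a' b').1 ha'b'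
    refine (hR _ _).2 ⟨M.op x x', hX x hx x' hx', ?_⟩
    calc M.op (M.op a a') e = M.op (M.op a a') (M.op e e) := by rw [he]
      _ = M.op (M.op a e) (M.op a' e) := M.medial a a' e e
      _ = M.op (M.op x b) (M.op x' b') := by rw [hxe, hxe']
      _ = M.op (M.op x x') (M.op b b') := M.medial x b x' b'
  · intro a
    exact (hR a a).2 ⟨e, heX, M.comm a e⟩
  · intro hmon a b c hab hbc
    obtain ⟨x, hx, hxe⟩ := (hR a b).1 hab
    obtain ⟨y, hy, hye⟩ := (hR b c).1 hbc
    obtain ⟨w, hw, hwe⟩ := hmon x hx y hy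
    refine (hR a c).2 ⟨w, hw, M.cancel _ _ e ?_⟩
    calc M.op (M.op a e) e = M.op (M.op x b) e := by rw [hxe]
      _ = M.op (M.op x b) (M.op e e) := by rw [he]
      _ = M.op (M.op x e) (M.op b e) := M.medial x b e e
      _ = M.op (M.op x y) (M.op e c) := by rw [hye, M.medial x e y c]
      _ = M.op (M.op w e) (M.op c e) := by rw [hwe, M.comm e c]
      _ = M.op (M.op w c) (M.op e e) := (M.medial w c e e).symm
      _ = M.op (M.op w c) e := by rw [he]
end

section
/- Let (A,⊕) be a ccm-magma, X ⊆ A a subalgebra (closed under ⊕), and e ∈ X an idempotent element (e ⊕ e = e). Define the relation R on A by a R b ⇔ there exists x ∈ X with a ⊕ e = x ⊕ b. Then R is symmetric if and only if X is e-symmetric, i.e., for every x ∈ X there exists y ∈ X with y ⊕ x = e. -/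
theorem stmt17 {A : Type*} (M : CCM A) (X : Set A)
    (hX : ∀ x ∈ X, ∀ y ∈ X, M.op x y ∈ X)
    (e : A) (heX : e ∈ X) (he : M.op e e = e)
    (R : A → A → Prop) (hR : ∀ a b, R a b ↔ ∃ x ∈ X, M.op a e = M.op x b) :
    (∀ a b, R a b → R b a) ↔ (∀ x ∈ X, ∃ y ∈ X, M.op y x = e) := by
  constructor
  · intro hsym x hx
    have hxe : R x e := (hR x e).mpr ⟨x, hx, rfl⟩
    obtain ⟨y, hy, hye⟩ := (hR e x).mp (hsym x e hxe)
    exact ⟨y, hy, (he ▸ hye).symm⟩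
  · intro hsymX a b hab
    obtain ⟨x, hx, hab'⟩ := (hR a b).mp hab
    obtain ⟨y, hy, hyx⟩ := hsymX x hx
    refine (hR b a).mpr ⟨y, hy, ?_⟩
    apply M.cancel _ _ (M.op x e)
    calc M.op (M.op b e) (M.op x e)
        = M.op (M.op b x) (M.op e e) := M.medial b e x e
      _ = M.op (M.op e e) (M.op b x) := M.comm _ _
      _ = M.op (M.op e b) (M.op e x) := M.medial e e b x
      _ = M.op (M.op e e) (M.op x b) := by
          rw [M.medial e b e x, M.comm b x]
      _ = M.op (M.op e e) (M.op a e) := by rw [← hab']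
      _ = M.op e (M.op a e) := by rw [he]
      _ = M.op (M.op y x) (M.op a e) := by rw [hyx]
      _ = M.op (M.op y a) (M.op x e) := M.medial y x a e
end

section
/- Let (A,⊕) be a ccm-magma, X ⊆ A a subalgebra (closed under ⊕), and e ∈ X an idempotent element (e ⊕ e = e). Define the relation R on A by a R b ⇔ there exists x ∈ X with a ⊕ e = x ⊕ b. Then R is transitive if and only if the following condition holds: for all x, y ∈ X and all c ∈ A, if there exist a, b ∈ A such that a ⊕ e = x ⊕ b and b ⊕ e = y ⊕ c, then there exists z ∈ X with z ⊕ e = x ⊕ y. -/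
theorem stmt18 {A : Type*} (M : CCM A) (X : Set A)
    (hX : ∀ x ∈ X, ∀ y ∈ X, M.op x y ∈ X)
    (e : A) (heX : e ∈ X) (he : M.op e e = e)
    (R : A → A → Prop) (hR : ∀ a b, R a b ↔ ∃ x ∈ X, M.op a e = M.op x b) :
    (∀ a b c, R a b → R b c → R a c) ↔
      (∀ x ∈ X, ∀ y ∈ X, ∀ c : A,
        (∃ a b : A, M.op a e = M.op x b ∧ M.op b e = M.op y c) →
          ∃ z ∈ X, M.op z e = M.op x y) := by
  -- key identity: (x⊕b)⊕e = (x⊕y)⊕(e⊕c) when b⊕e = y⊕c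
  have key : ∀ x b y c : A, M.op b e = M.op y c →
      M.op (M.op x b) e = M.op (M.op x y) (M.op e c) := by
    intro x b y c hb
    calc M.op (M.op x b) e = M.op (M.op x b) (M.op e e) := by rw [he]
    _ = M.op (M.op x e) (M.op b e) := M.medial ..
    _ = M.op (M.op x e) (M.op y c) := by rw [hb]
    _ = M.op (M.op x y) (M.op e c) := M.medial ..
  constructor
  · intro htrans x hx y hy c ⟨a, b, hab, hbc⟩
    obtain ⟨w, hw, hac⟩ := (hR a c).mp
      (htrans a b c ((hR a b).mpr ⟨x, hx, hab⟩) ((hR b c).mpr ⟨y, hy, hbc⟩))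
    refine ⟨w, hw, M.cancel _ _ (M.op e c) ?_⟩
    have h1 : M.op (M.op a e) e = M.op (M.op x y) (M.op e c) := by
      rw [hab]; exact key x b y c hbc
    have h2 : M.op (M.op a e) e = M.op (M.op w e) (M.op e c) := by
      calc M.op (M.op a e) e = M.op (M.op w c) (M.op e e) := by rw [hac, he]
      _ = M.op (M.op w e) (M.op c e) := M.medial ..
      _ = M.op (M.op w e) (M.op e c) := by rw [M.comm c e]
    rw [← h1, h2]
  · intro hcond a b c hab hbc
    obtain ⟨x, hx, hab⟩ := (hR a b).mp hab
    obtain ⟨y, hy, hbc⟩ := (hR b c).mp hbc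
    obtain ⟨z, hz, hze⟩ := hcond x hx y hy c ⟨a, b, hab, hbc⟩
    refine (hR a c).mpr ⟨z, hz, M.cancel _ _ e ?_⟩
    calc M.op (M.op a e) e = M.op (M.op x y) (M.op e c) := by
          rw [hab]; exact key x b y c hbc
    _ = M.op (M.op z e) (M.op e c) := by rw [hze]
    _ = M.op (M.op z e) (M.op c e) := by rw [M.comm e c]
    _ = M.op (M.op z c) (M.op e e) := (M.medial ..).symm
    _ = M.op (M.op z c) e := by rw [he]
end
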